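/- arXiv:2111.14771 — 5 statements merged into one kernel-verified Lean document; each statement's English description precedes it below -/
import Mathlib

section
/- Let G be a graph, S ⊆ V(G), and P a Hamiltonian path of G with endpoints u and v. Let End be the set of endpoints of all Hamiltonian paths obtainable from P by sequences of Pósa rotations fixing v, where each rotation's pivot vertex is required to lie outside S and each new endpoint must be distinct from all previously obtained endpoints. Then |N_G(End) \ S| < 2|End|, where N_G(End) denotes the external neighborhood of End in G. -/
/-- A Hamiltonian path of `G`, given as a list of vertices: no repetitions, covers every
vertex, and consecutive vertices are adjacent. -/
def IsHamPathList {V : Type*} (G : SimpleGraph V) (p : List V) : Prop :=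
  p.Nodup ∧ (∀ v : V, v ∈ p) ∧ p.Chain' G.Adj

/-- A restricted Pósa rotation fixing the first vertex of the path. Writing
`p = a ++ b` with `a = v₁,...,vᵢ` and `b = v_{i+1},...,v_n`, if the pivot `vᵢ` lies
outside `S` and `vᵢ vₙ` is an edge of `G`, the rotation produces
`q = v₁,...,vᵢ,vₙ,v_{n-1},...,v_{i+1} = a ++ b.reverse`. -/
def PosaRotation {V : Type*} (G : SimpleGraph V) (S : Set V) (p q : List V) : Prop :=
  ∃ (a b : List V) (ha : a ≠ []) (hb : b ≠ []),
    p = a ++ b ∧ 2 ≤ b.length ∧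
    a.getLast ha ∉ S ∧ G.Adj (a.getLast ha) (b.getLast hb) ∧
    q = a ++ b.reverse

/-- The set of endpoints of all paths obtainable from `p` by sequences of restricted
Pósa rotations (fixing the first vertex of `p`, pivots outside `S`). -/
def posaEnd {V : Type*} (G : SimpleGraph V) (S : Set V) (p : List V) : Set V :=
  {w | ∃ (q : List V) (hq : q ≠ []),
    Relation.ReflTransGen (PosaRotation G S) p q ∧ q.getLast hq = w}

/-!
A path edge with neither end in `End` survives every rotation: a rotation breaks only the edge
from the pivot to the vertex that becomes the new endpoint. Let `x ∉ S ∪ End` be adjacent to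
`e ∈ End`, the endpoint of a rotated path `q`. Rotating `q` about the pivot `x` makes the
successor `z` of `x` on `q` an endpoint. If no neighbour of `x` on `P` were in `End`, those
neighbours would still be neighbours of `x` on `q`, and `z` would be one more, which is too many
for a vertex of a path (the first vertex, fixed by all rotations, has only one). So every vertex
of `N(End) \ S` is the successor or the predecessor on `P` of a vertex of `End`, and the last
vertex of `P`, which lies in `End`, has no successor: at most `(|End| - 1) + |End|` vertices.
-/

theorem Set.ncard_le_ncard_of_forall_subsingleton {α β : Type*} {s : Set α} {t : Set β}
    (r : α → β → Prop) (hs : ∀ a ∈ s, ∃ b ∈ t, r a b)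
    (ht : ∀ b ∈ t, {a ∈ s | r a b}.Subsingleton) (htf : t.Finite) : s.ncard ≤ t.ncard := by
  obtain rfl | ⟨a₀, ha₀⟩ := s.eq_empty_or_nonempty
  · simp
  have : Nonempty β := ⟨(hs a₀ ha₀).choose⟩
  choose! f hft hfr using hs
  refine Set.ncard_le_ncard_of_injOn f hft (fun a ha a' ha' h => ?_) htf
  exact ht _ (hft a ha) ⟨ha, hfr a ha⟩ ⟨ha', h ▸ hfr a' ha'⟩

namespace List

variable {α : Type*} {l a b : List α} {x y z s t : α}

def Adjacent (l : List α) (x y : α) : Prop := [x, y] <:+: l ∨ [y, x] <:+: l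

theorem Adjacent.symm (h : l.Adjacent x y) : l.Adjacent y x :=
  Or.symm h

theorem exists_getElem_of_pair_infix (h : [x, y] <:+: l) :
    ∃ (i : ℕ) (hi : i + 1 < l.length), l[i] = x ∧ l[i + 1] = y := by
  obtain ⟨s, t, rfl⟩ := h
  exact ⟨s.length, by simp, by simp, by simp⟩

theorem pair_infix_reverse_iff : [y, x] <:+: l.reverse ↔ [x, y] <:+: l := by
  rw [← reverse_infix, reverse_reverse, reverse_cons, reverse_singleton, singleton_append]

theorem Nodup.eq_of_pair_infix_of_pair_infix (hl : l.Nodup) (hy : [x, y] <:+: l)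
    (hz : [x, z] <:+: l) : y = z := by
  obtain ⟨i, hi, rfl, rfl⟩ := exists_getElem_of_pair_infix hy
  obtain ⟨j, hj, hji, rfl⟩ := exists_getElem_of_pair_infix hz
  obtain rfl := (hl.getElem_inj_iff.mp hji).symm
  rfl

theorem Nodup.eq_of_pair_infix_of_pair_infix' (hl : l.Nodup) (hy : [y, x] <:+: l)
    (hz : [z, x] <:+: l) : y = z :=
  (nodup_reverse.mpr hl).eq_of_pair_infix_of_pair_infix
    (pair_infix_reverse_iff.mpr hy) (pair_infix_reverse_iff.mpr hz)

theorem Nodup.ne_of_pair_infix_of_pair_infix (hl : l.Nodup) (hs : [s, x] <:+: l)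
    (ht : [x, t] <:+: l) : s ≠ t := by
  obtain ⟨i, hi, rfl, hix⟩ := exists_getElem_of_pair_infix hs
  obtain ⟨j, hj, hjx, rfl⟩ := exists_getElem_of_pair_infix ht
  obtain rfl : j = i + 1 := hl.getElem_inj_iff.mp (hjx.trans hix.symm)
  intro h
  have := hl.getElem_inj_iff.mp h
  omega

theorem Nodup.not_pair_infix_of_head?_eq (hl : l.Nodup) (hx : l.head? = some x) :
    ¬ [y, x] <:+: l := by
  intro h
  obtain ⟨i, hi, -, hix⟩ := exists_getElem_of_pair_infix h
  rw [head?_eq_getElem?, getElem?_eq_some_iff] at hx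
  obtain ⟨h0, h0x⟩ := hx
  have := hl.getElem_inj_iff.mp (hix.trans h0x.symm)
  omega

theorem exists_pair_infix_of_mem (hx : x ∈ l) (hlast : l.getLast? ≠ some x) :
    ∃ y, [x, y] <:+: l := by
  obtain ⟨s, _ | ⟨y, t⟩, rfl⟩ := mem_iff_append.mp hx
  · simp at hlast
  · exact ⟨y, s, t, by simp⟩

theorem exists_pair_infix_of_mem' (hx : x ∈ l) (hhead : l.head? ≠ some x) :
    ∃ y, [y, x] <:+: l := by
  obtain ⟨y, hy⟩ := exists_pair_infix_of_mem (mem_reverse.mpr hx) (by rwa [getLast?_reverse])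
  exact ⟨y, pair_infix_reverse_iff.mp hy⟩

theorem Nodup.getLast?_ne_of_pair_infix (hl : l.Nodup) (h : [x, y] <:+: l) :
    l.getLast? ≠ some x := by
  intro hx
  rw [← head?_reverse] at hx
  exact (nodup_reverse.mpr hl).not_pair_infix_of_head?_eq hx (pair_infix_reverse_iff.mpr h)

theorem Nodup.eq_of_head?_of_adjacent (hl : l.Nodup) (hx : l.head? = some x)
    (hz : [x, z] <:+: l) (ht : l.Adjacent x t) : t = z :=
  ht.elim (hl.eq_of_pair_infix_of_pair_infix · hz)
    (absurd · (hl.not_pair_infix_of_head?_eq hx))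

theorem Nodup.eq_or_eq_of_adjacent (hl : l.Nodup) (hz : [x, z] <:+: l)
    (hs : l.Adjacent x s) (ht : l.Adjacent x t) : s = z ∨ t = z ∨ s = t := by
  rcases hs with hs | hs
  · exact .inl (hl.eq_of_pair_infix_of_pair_infix hs hz)
  rcases ht with ht | ht
  · exact .inr (.inl (hl.eq_of_pair_infix_of_pair_infix ht hz))
  · exact .inr (.inr (hl.eq_of_pair_infix_of_pair_infix' hs ht))

theorem adjacent_append_reverse_of_pair_infix (h : [x, y] <:+: a ++ b) (hy : b.head? ≠ some y) :
    (a ++ b.reverse).Adjacent x y := by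
  rcases infix_append_iff_ne_nil.mp h with h | h | ⟨l₁, l₂, h₁, h₂, h, -, hb⟩
  · exact .inl (h.trans (prefix_append a _).isInfix)
  · exact .inr ((pair_infix_reverse_iff.mpr h).trans (suffix_append a _).isInfix)
  · obtain ⟨rfl, rfl⟩ : l₁ = [x] ∧ l₂ = [y] := by
      obtain _ | ⟨_, _ | ⟨_, _ | _⟩⟩ := l₁ <;> simp_all
    obtain ⟨t, rfl⟩ := hb
    simp at hy

theorem Adjacent.append_reverse (h : (a ++ b).Adjacent x y) (hx : b.head? ≠ some x)
    (hy : b.head? ≠ some y) : (a ++ b.reverse).Adjacent x y :=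
  h.elim (adjacent_append_reverse_of_pair_infix · hy)
    (fun h => (adjacent_append_reverse_of_pair_infix h hx).symm)

theorem Nodup.ncard_setOf_pair_infix_le {E : Set α} (hl : l.Nodup) (hE : E.Finite) :
    {y | ∃ x ∈ E, [x, y] <:+: l}.ncard ≤ E.ncard :=
  Set.ncard_le_ncard_of_forall_subsingleton (fun y x => [x, y] <:+: l) (fun _ => id)
    (fun _ _ _ h _ h' => hl.eq_of_pair_infix_of_pair_infix h.2 h'.2) hE

theorem Nodup.ncard_setOf_pair_infix_le' {E : Set α} (hl : l.Nodup) (hE : E.Finite) :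
    {x | ∃ y ∈ E, [x, y] <:+: l}.ncard ≤ E.ncard :=
  Set.ncard_le_ncard_of_forall_subsingleton (fun x y => [x, y] <:+: l) (fun _ => id)
    (fun _ _ _ h _ h' => hl.eq_of_pair_infix_of_pair_infix' h.2 h'.2) hE

end List

section Posa

variable {V : Type*} {G : SimpleGraph V} {S : Set V} {p q q' : List V} {x z e w : V}

theorem PosaRotation.perm (h : PosaRotation G S q q') : q'.Perm q := by
  obtain ⟨a, b, -, -, rfl, -, -, -, rfl⟩ := h
  exact (List.reverse_perm b).append_left a

theorem PosaRotation.head? (h : PosaRotation G S q q') : q'.head? = q.head? := by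
  obtain ⟨a, b, ha, -, rfl, -, -, -, rfl⟩ := h
  rw [List.head?_append_of_ne_nil _ ha, List.head?_append_of_ne_nil _ ha]

theorem PosaRotation.adjacent (h : PosaRotation G S q q') (hxy : q.Adjacent x y)
    (hx : q'.getLast? ≠ some x) (hy : q'.getLast? ≠ some y) : q'.Adjacent x y := by
  obtain ⟨a, b, -, hb, rfl, -, -, -, rfl⟩ := h
  rw [List.getLast?_append_of_ne_nil _ (by simpa using hb), List.getLast?_reverse] at hx hy
  exact hxy.append_reverse hx hy

theorem PosaRotation.of_adj {l m : List V} {x z e : V} (hx : x ∉ S) (hadj : G.Adj x e) :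
    PosaRotation G S (l ++ x :: z :: m ++ [e]) (l ++ x :: e :: m.reverse ++ [z]) :=
  ⟨l ++ [x], z :: (m ++ [e]), by simp, by simp, by simp, by simp, by simpa, by simpa, by simp⟩

theorem mem_posaEnd_iff :
    w ∈ posaEnd G S p ↔ ∃ l, Relation.ReflTransGen (PosaRotation G S) p (l ++ [w]) := by
  refine ⟨fun ⟨q, hq, h, hw⟩ => ⟨q.dropLast, ?_⟩, fun ⟨l, h⟩ => ⟨_, by simp, h, by simp⟩⟩
  rwa [← hw, List.dropLast_append_getLast]

theorem mem_posaEnd_of_getLast? (h : Relation.ReflTransGen (PosaRotation G S) p q)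
    (hw : q.getLast? = some w) : w ∈ posaEnd G S p := by
  obtain ⟨l, rfl⟩ := List.getLast?_eq_some_iff.mp hw
  exact mem_posaEnd_iff.mpr ⟨l, h⟩

namespace Relation.ReflTransGen

theorem perm_of_posaRotation (h : ReflTransGen (PosaRotation G S) p q) : q.Perm p := by
  induction h with
  | refl => rfl
  | tail _ hstep ih => exact hstep.perm.trans ih

theorem head?_of_posaRotation (h : ReflTransGen (PosaRotation G S) p q) :
    q.head? = p.head? := by
  induction h with
  | refl => rfl
  | tail _ hstep ih => exact hstep.head?.trans ih

theorem adjacent_of_posaRotation (h : ReflTransGen (PosaRotation G S) p q)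
    (hxy : p.Adjacent x y) (hx : x ∉ posaEnd G S p) (hy : y ∉ posaEnd G S p) :
    q.Adjacent x y := by
  induction h with
  | refl => exact hxy
  | tail hpq hstep ih =>
    exact hstep.adjacent ih (hx ∘ mem_posaEnd_of_getLast? (hpq.tail hstep))
      (hy ∘ mem_posaEnd_of_getLast? (hpq.tail hstep))

end Relation.ReflTransGen

theorem mem_posaEnd_of_pair_infix {l : List V}
    (h : Relation.ReflTransGen (PosaRotation G S) p (l ++ [e])) (hxz : [x, z] <:+: l ++ [e])
    (hx : x ∉ S) (hadj : G.Adj x e) : z ∈ posaEnd G S p := by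
  obtain ⟨s, t, hst⟩ := hxz
  rcases t.eq_nil_or_concat with rfl | ⟨m, f, rfl⟩
  · obtain ⟨-, rfl⟩ := List.append_singleton_inj.mp
      (show s ++ [x] ++ [z] = l ++ [e] by simpa using hst)
    exact mem_posaEnd_iff.mpr ⟨l, h⟩
  · obtain ⟨rfl, rfl⟩ := List.append_singleton_inj.mp
      (show s ++ x :: z :: m ++ [f] = l ++ [e] by simpa using hst)
    exact mem_posaEnd_iff.mpr ⟨_, h.tail (.of_adj hx hadj)⟩

theorem exists_adjacent_mem_posaEnd (hp : p.Nodup) (hxp : x ∈ p) (hxE : x ∉ posaEnd G S p)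
    (hxS : x ∉ S) (heE : e ∈ posaEnd G S p) (hex : G.Adj e x) :
    ∃ y ∈ posaEnd G S p, p.Adjacent x y := by
  by_contra! hfar
  obtain ⟨l, hq⟩ := mem_posaEnd_iff.mp heE
  have hkeep : ∀ y, p.Adjacent x y → (l ++ [e]).Adjacent x y := fun y hy =>
    hq.adjacent_of_posaRotation hy hxE fun hyE => hfar y hyE hy
  have hqp := hq.perm_of_posaRotation
  have hqnd : (l ++ [e]).Nodup := hqp.nodup_iff.mpr hp
  obtain ⟨z, hxz⟩ := List.exists_pair_infix_of_mem (hqp.mem_iff.mpr hxp) (by simpa using hex.ne)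
  have hzE : z ∈ posaEnd G S p := mem_posaEnd_of_pair_infix hq hxz hxS hex.symm
  obtain ⟨t, hxt⟩ := List.exists_pair_infix_of_mem hxp (hxE ∘ mem_posaEnd_of_getLast? .refl)
  have htz : t ≠ z := fun h => hfar z hzE (.inl (h ▸ hxt))
  by_cases hhead : p.head? = some x
  · exact htz (hqnd.eq_of_head?_of_adjacent (hq.head?_of_posaRotation.trans hhead) hxz
      (hkeep t (.inl hxt)))
  obtain ⟨s, hsx⟩ := List.exists_pair_infix_of_mem' hxp hhead
  have hsz : s ≠ z := fun h => hfar z hzE (.inr (h ▸ hsx))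
  rcases hqnd.eq_or_eq_of_adjacent hxz (hkeep s (.inr hsx)) (hkeep t (.inl hxt)) with h | h | h
  exacts [hsz h, htz h, hp.ne_of_pair_infix_of_pair_infix hsx hxt h]

end Posa

theorem stmt0_general {V : Type*} (G : SimpleGraph V) (S : Set V)
    (p : List V) (hp : IsHamPathList G p) (hne : p ≠ []) :
    ({w | w ∉ posaEnd G S p ∧ ∃ u ∈ posaEnd G S p, G.Adj u w} \ S).ncard
      < 2 * (posaEnd G S p).ncard := by
  set E := posaEnd G S p
  have : Finite V := Set.finite_univ_iff.mp ((List.finite_toSet p).subset fun v _ => hp.2.1 v)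
  have huE : p.getLast hne ∈ E := ⟨p, hne, .refl, rfl⟩
  have hcover : {w | w ∉ E ∧ ∃ u ∈ E, G.Adj u w} \ S ⊆
      {w | ∃ e ∈ E \ {p.getLast hne}, [e, w] <:+: p} ∪ {w | ∃ e ∈ E, [w, e] <:+: p} := by
    rintro x ⟨⟨hxE, e, heE, hex⟩, hxS⟩
    obtain ⟨y, hyE, hxy | hyx⟩ := exists_adjacent_mem_posaEnd hp.1 (hp.2.1 x) hxE hxS heE hex
    · exact .inr ⟨y, hyE, hxy⟩
    · refine .inl ⟨y, ⟨hyE, fun hy => hp.1.getLast?_ne_of_pair_infix hyx ?_⟩, hyx⟩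
      rw [hy, List.getLast?_eq_some_getLast hne]
  calc _ ≤ _ := Set.ncard_le_ncard hcover
    _ ≤ _ := Set.ncard_union_le _ _
    _ ≤ (E \ {p.getLast hne}).ncard + E.ncard := add_le_add
        (hp.1.ncard_setOf_pair_infix_le (Set.toFinite _))
        (hp.1.ncard_setOf_pair_infix_le' (Set.toFinite _))
    _ < 2 * E.ncard := by
      rw [Set.ncard_sdiff_singleton_of_mem huE]
      have := (Set.ncard_pos (Set.toFinite E)).mpr ⟨_, huE⟩
      omega

/-- **Pósa's lemma for restricted rotations.** Let `P` be a Hamiltonian path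
of `G` and `S ⊆ V(G)`. If `End` is the set of endpoints of Hamiltonian paths obtained from
`P` by sequences of restricted Pósa rotations fixing the first endpoint `v`, with pivots
outside `S`, then `|N_G(End) \ S| < 2|End|`. -/
theorem stmt0 {V : Type*} [Fintype V] [DecidableEq V] (G : SimpleGraph V) (S : Set V)
    (p : List V) (hp : IsHamPathList G p) (hne : p ≠ []) :
    ({w | w ∉ posaEnd G S p ∧ ∃ u ∈ posaEnd G S p, G.Adj u w} \ S).ncard
      < 2 * (posaEnd G S p).ncard :=
  stmt0_general G S p hp hne
end

section
/- Let n be sufficiently large, p ≥ 100 log n / n, and G_1 ~ G(n, p/2). For each 1 ≤ j ≤ 0.02n, let A_j be the event that there exists a set S of size j with |N_{G_1}(S)| < 2j. Then P(A_j) ≤ C(n,j)·C(n,2j)·(1 - p/2)^{j(n-3j)}, and consequently [j⁴ C(n,j) + j⁷ 2^{3j} n] · P(A_j) = O(1). -/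
open Finset

/-- Potential edges of a graph on `Fin n`: non-diagonal unordered pairs. -/
abbrev PotEdge (n : ℕ) := {e : Sym2 (Fin n) // ¬ e.IsDiag}

open scoped Classical in
/-- The probability, under the binomial random graph `G(n,q)` (each potential edge present
independently with probability `q`), of the set of graphs (edge sets) satisfying `P`. -/
noncomputable def gnpProb (n : ℕ) (q : ℝ) (P : Finset (PotEdge n) → Prop) : ℝ :=
  ∑ E : Finset (PotEdge n),
    if P E then q ^ E.card * (1 - q) ^ (Fintype.card (PotEdge n) - E.card) else 0

open scoped Classical in
/-- The external neighborhood of `S` in the graph with edge set `E`. -/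
noncomputable def eNbhd {n : ℕ} (E : Finset (PotEdge n)) (S : Finset (Fin n)) :
    Finset (Fin n) :=
  Finset.univ.filter fun v => v ∉ S ∧ ∃ u ∈ S, ∃ e ∈ E, e.1 = s(u, v)

/-- The event `A_j`: some vertex set of size `j` has external neighborhood of
size less than `2j`. -/
def eventA (n j : ℕ) (E : Finset (PotEdge n)) : Prop :=
  ∃ S : Finset (Fin n), S.card = j ∧ (eNbhd E S).card < 2 * j

/-!
A vertex set `S` of size `j` with `|N(S)| < 2j` lies, together with some `2j`-set `T ⊇ N(S)`,
in a pair `(S, T)` such that no edge joins `S` to the at least `n - 3j` vertices outside `S ∪ T`.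
A union bound over the `C(n,j) C(n,2j)` such pairs gives the first inequality. For the second,
`n - 3j ≥ 0.94 n` and `pn/2 ≥ 50 log n` give `(1 - p/2)^{j(n-3j)} ≤ e^{-pj(n-3j)/2} ≤ n^{-47j}`,
while the prefactor times `C(n,j) C(n,2j)` is at most `2 n^{6j+8}`.
-/

section GnpProb

variable {n : ℕ} {q : ℝ}

lemma gnp_weight_nonneg (hq0 : 0 ≤ q) (hq1 : q ≤ 1) (E : Finset (PotEdge n)) :
    0 ≤ q ^ #E * (1 - q) ^ (Fintype.card (PotEdge n) - #E) :=
  mul_nonneg (pow_nonneg hq0 _) (pow_nonneg (sub_nonneg.2 hq1) _)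

lemma gnpProb_le_sum_of_forall_exists (hq0 : 0 ≤ q) (hq1 : q ≤ 1) {ι : Type*} (I : Finset ι)
    {P : Finset (PotEdge n) → Prop} {Q : ι → Finset (PotEdge n) → Prop}
    (h : ∀ E, P E → ∃ i ∈ I, Q i E) :
    gnpProb n q P ≤ ∑ i ∈ I, gnpProb n q (Q i) := by
  classical
  unfold gnpProb
  rw [sum_comm]
  refine sum_le_sum fun E _ => ?_
  have hterm : ∀ i ∈ I, 0 ≤ if Q i E then
      q ^ #E * (1 - q) ^ (Fintype.card (PotEdge n) - #E) else 0 := fun i _ => by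
    split_ifs; exacts [gnp_weight_nonneg hq0 hq1 E, le_rfl]
  split_ifs with hP
  · obtain ⟨i, hi, hQ⟩ := h E hP
    simpa [hQ] using single_le_sum hterm hi
  · exact sum_nonneg hterm

lemma gnpProb_disjoint (F : Finset (PotEdge n)) :
    gnpProb n q (Disjoint · F) = (1 - q) ^ #F := by
  have hfilter : univ.filter (Disjoint · F) = Fᶜ.powerset := by
    ext E; simp [subset_compl_iff_disjoint_right]
  have hweight : ∀ E ∈ Fᶜ.powerset, q ^ #E * (1 - q) ^ (Fintype.card (PotEdge n) - #E)
      = (1 - q) ^ #F * (q ^ #E * (1 - q) ^ (#Fᶜ - #E)) := fun E hE => by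
    have hE : #E ≤ #Fᶜ := card_le_card (mem_powerset.1 hE)
    rw [card_compl] at hE ⊢
    rw [mul_left_comm, ← pow_add]
    congr 2
    have := card_le_univ F
    omega
  have hsum : gnpProb n q (Disjoint · F) = ∑ E ∈ Fᶜ.powerset,
      q ^ #E * (1 - q) ^ (Fintype.card (PotEdge n) - #E) := by
    rw [gnpProb, ← hfilter, sum_filter]
    congr!
  rw [hsum, sum_congr rfl hweight, ← mul_sum,
    sum_pow_mul_eq_add_pow, add_sub_cancel, one_pow, mul_one]

end GnpProb

section CrossEdges

variable {n : ℕ}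

open scoped Classical in
noncomputable def crossEdges (S U : Finset (Fin n)) : Finset (PotEdge n) :=
  univ.filter fun e => ∃ u ∈ S, ∃ v ∈ U, e.1 = s(u, v)

lemma card_crossEdges {S U : Finset (Fin n)} (h : Disjoint S U) :
    #(crossEdges S U) = #S * #U := by
  rw [← card_product]
  symm
  refine card_bij (fun p hp => ⟨s(p.1, p.2), ?_⟩) ?_ ?_ ?_
  · rw [Sym2.mk_isDiag_iff]
    intro hdiag
    exact disjoint_left.1 h (mem_product.1 hp).1 (hdiag ▸ (mem_product.1 hp).2)
  · rintro ⟨u, v⟩ huv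
    rw [mem_product] at huv
    simpa [crossEdges] using ⟨u, huv.1, v, huv.2, Or.inl ⟨rfl, rfl⟩⟩
  · rintro ⟨u, v⟩ huv ⟨u', v'⟩ huv' heq
    rw [mem_product] at huv huv'
    rcases Sym2.eq_iff.1 (congrArg Subtype.val heq) with ⟨rfl, rfl⟩ | ⟨rfl, -⟩
    · rfl
    · exact absurd huv'.2 (disjoint_left.1 h huv.1)
  · intro e he
    obtain ⟨u, hu, v, hv, he⟩ := (mem_filter.1 he).2
    exact ⟨(u, v), mem_product.2 ⟨hu, hv⟩, Subtype.ext he.symm⟩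

lemma disjoint_crossEdges_of_eNbhd_subset {E : Finset (PotEdge n)}
    {S T : Finset (Fin n)} (h : eNbhd E S ⊆ T) : Disjoint E (crossEdges S (S ∪ T)ᶜ) := by
  rw [disjoint_left]
  intro e heE heC
  obtain ⟨u, hu, v, hv, he⟩ := (mem_filter.1 heC).2
  rw [mem_compl, mem_union, not_or] at hv
  exact hv.2 (h (mem_filter.2 ⟨mem_univ v, hv.1, u, hu, e, heE, he⟩))

lemma exists_disjoint_crossEdges_of_eventA {j : ℕ} (hj : 3 * j ≤ n)
    {E : Finset (PotEdge n)} (hE : eventA n j E) :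
    ∃ ST ∈ powersetCard j (univ : Finset (Fin n)) ×ˢ powersetCard (2 * j) univ,
      Disjoint E (crossEdges ST.1 (ST.1 ∪ ST.2)ᶜ) := by
  obtain ⟨S, hS, hN⟩ := hE
  obtain ⟨T, hNT, hT⟩ := exists_superset_card_eq hN.le (by simp; omega)
  exact ⟨(S, T), by simp [hS, hT], disjoint_crossEdges_of_eNbhd_subset hNT⟩

lemma gnpProb_eventA_le {j : ℕ} {q : ℝ} (hq0 : 0 ≤ q) (hq1 : q ≤ 1) (hj : 3 * j ≤ n) :
    gnpProb n q (eventA n j) ≤ n.choose j * n.choose (2 * j) * (1 - q) ^ (j * (n - 3 * j)) := by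
  refine (gnpProb_le_sum_of_forall_exists hq0 hq1 _ fun E =>
    exists_disjoint_crossEdges_of_eventA hj).trans ?_
  have hterm : ∀ ST ∈ powersetCard j (univ : Finset (Fin n)) ×ˢ powersetCard (2 * j) univ,
      gnpProb n q (Disjoint · (crossEdges ST.1 (ST.1 ∪ ST.2)ᶜ)) ≤ (1 - q) ^ (j * (n - 3 * j)) := by
    rintro ⟨S, T⟩ hST
    simp only [mem_product, mem_powersetCard_univ] at hST ⊢
    rw [gnpProb_disjoint, card_crossEdges (disjoint_compl_right.mono_left subset_union_left)]
    refine pow_le_pow_of_le_one (sub_nonneg.2 hq1) (by linarith) ?_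
    rw [hST.1, card_compl, Fintype.card_fin]
    have := card_union_le S T
    gcongr
    omega
  refine (sum_le_sum hterm).trans_eq ?_
  rw [sum_const, card_product, card_powersetCard, card_powersetCard, card_univ, Fintype.card_fin,
    nsmul_eq_mul]
  push_cast
  ring

end CrossEdges

lemma one_sub_pow_le_inv_pow {q x : ℝ} {m k : ℕ} (hq : q ≤ 1) (hx : 0 < x)
    (h : k * Real.log x ≤ m * q) : (1 - q) ^ m ≤ (x ^ k)⁻¹ :=
  calc (1 - q) ^ m ≤ Real.exp (-q) ^ m :=
        pow_le_pow_left₀ (sub_nonneg.2 hq) (Real.one_sub_le_exp_neg q) m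
    _ = Real.exp (-(m * q)) := by rw [← Real.exp_nat_mul, mul_neg]
    _ ≤ Real.exp (-(k * Real.log x)) := Real.exp_le_exp.2 (neg_le_neg h)
    _ = (x ^ k)⁻¹ := by rw [Real.exp_neg, ← Real.log_pow, Real.exp_log (pow_pos hx k)]

lemma forty_seven_mul_mul_log_le {n j q : ℝ} (hq : 0 ≤ q) (hj : 0 ≤ j) (hjn : j ≤ 0.02 * n)
    (hlog : 50 * Real.log n ≤ n * q) : 47 * j * Real.log n ≤ j * (n - 3 * j) * q := by
  nlinarith [mul_le_mul_of_nonneg_left hlog (by linarith : (0 : ℝ) ≤ 0.94 * j),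
    mul_nonneg (mul_nonneg hq hj) (by linarith : (0 : ℝ) ≤ 0.02 * n - j)]

lemma coeff_mul_choose_mul_choose_le {n j : ℕ} (hj : 1 ≤ j) (hjn : j ≤ n) (hn : 2 ≤ n) :
    (j ^ 4 * n.choose j + j ^ 7 * 2 ^ (3 * j) * n) * (n.choose j * n.choose (2 * j))
      ≤ 2 * n ^ (47 * j) := by
  calc _ ≤ (n ^ 4 * n ^ j + n ^ 7 * n ^ (3 * j) * n) * (n ^ j * n ^ (2 * j)) := by
        gcongr
        all_goals exact Nat.choose_le_pow n _
    _ = (n ^ (j + 4) + n ^ (3 * j + 8)) * n ^ (3 * j) := by ring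
    _ ≤ (n ^ (3 * j + 8) + n ^ (3 * j + 8)) * n ^ (3 * j) := by
        gcongr <;> omega
    _ = 2 * n ^ (6 * j + 8) := by ring
    _ ≤ 2 * n ^ (47 * j) := by
        gcongr <;> omega

/-- For `n` sufficiently large, `p ≥ 100 log n / n`, `G₁ ~ G(n, p/2)` and
`1 ≤ j ≤ 0.02n`: `P(A_j) ≤ C(n,j)·C(n,2j)·(1-p/2)^{j(n-3j)}`, and consequently
`[j⁴ C(n,j) + j⁷ 2^{3j} n]·P(A_j) = O(1)`. -/
theorem stmt9 :
    ∃ C : ℝ, 0 < C ∧ ∃ N : ℕ, ∀ n ≥ N, ∀ p : ℝ,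
      100 * Real.log n / n ≤ p → p ≤ 1 →
      ∀ j : ℕ, 1 ≤ j → (j : ℝ) ≤ 0.02 * n →
        gnpProb n (p / 2) (eventA n j)
            ≤ (n.choose j : ℝ) * (n.choose (2 * j) : ℝ) * (1 - p / 2) ^ (j * (n - 3 * j)) ∧
          ((j : ℝ) ^ 4 * (n.choose j : ℝ) + (j : ℝ) ^ 7 * 2 ^ (3 * j) * n)
              * gnpProb n (p / 2) (eventA n j) ≤ C := by
  refine ⟨2, two_pos, 1, fun n hn p hp hp1 j hj hjn => ?_⟩
  have hjr : (1 : ℝ) ≤ j := by exact_mod_cast hj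
  have hn0 : (0 : ℝ) < n := by linarith
  have hlog : 0 ≤ Real.log n := Real.log_nonneg (by linarith)
  have hp0 : 0 ≤ p := (div_nonneg (by positivity) hn0.le).trans hp
  have hj3 : 3 * j ≤ n := by exact_mod_cast (by push_cast; linarith : ((3 * j : ℕ) : ℝ) ≤ n)
  have hbound := gnpProb_eventA_le (q := p / 2) (by linarith) (by linarith) hj3
  refine ⟨hbound, ?_⟩
  have hexp : ((47 * j : ℕ) : ℝ) * Real.log n ≤ ((j * (n - 3 * j) : ℕ) : ℝ) * (p / 2) := by
    push_cast [Nat.cast_sub hj3]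
    rw [div_le_iff₀ hn0] at hp
    exact forty_seven_mul_mul_log_le (by linarith) (by linarith) hjn (by linarith)
  have hdecay := one_sub_pow_le_inv_pow (by linarith) hn0 hexp
  have hcoeff : _ ≤ ((2 * n ^ (47 * j) : ℕ) : ℝ) :=
    Nat.cast_le.2 (coeff_mul_choose_mul_choose_le hj (by omega) (by omega))
  push_cast at hcoeff
  calc _ ≤ ((j : ℝ) ^ 4 * n.choose j + j ^ 7 * 2 ^ (3 * j) * n)
          * (n.choose j * n.choose (2 * j) * ((n : ℝ) ^ (47 * j))⁻¹) := by
        gcongr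
        exact hbound.trans (by gcongr)
    _ ≤ 2 * (n : ℝ) ^ (47 * j) * ((n : ℝ) ^ (47 * j))⁻¹ := by
        rw [← mul_assoc]
        gcongr
    _ = 2 := by field_simp
end

section
/- Let G be a d-regular graph on n vertices with adjacency eigenvalues d = λ_1 ≥ λ_2 ≥ ... ≥ λ_n, and let λ = max_{2 ≤ i ≤ n} |λ_i|. Then for every two disjoint subsets U, W of V(G), |e(U,W) - d|U||W|/n| ≤ λ √(|U||W|(1 - |U|/n)(1 - |W|/n)). -/
/-!
Centre the indicator vectors: `x = 𝟙_U - (|U|/n)𝟙` and `y = 𝟙_W - (|W|/n)𝟙`. Since `G` is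
`d`-regular, `𝟙` is an eigenvector of the adjacency matrix `A` with eigenvalue `d`, and a direct
expansion gives `⟨x, Ay⟩ = e(U,W) - d|U||W|/n`, `‖x‖² = |U|(1 - |U|/n)`, `‖y‖² = |W|(1 - |W|/n)`.
In an orthonormal eigenbasis of `A`, `⟨x, Ay⟩ = ∑ μᵢ xᵢ yᵢ`. The vector `x` is orthogonal to `𝟙`,
so it has no coordinate on the eigenvalue `μ_{i₀} = d` unless `|d| ≤ λ`; hence every eigenvalue
met by `x` is at most `λ` in absolute value and Cauchy–Schwarz gives `|⟨x, Ay⟩| ≤ λ‖x‖‖y‖`.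
-/

open Finset Matrix

lemma Matrix.star_mulVec_dotProduct {n R : Type*} [Fintype n] [CommSemiring R] [StarRing R]
    [TrivialStar R] (M : Matrix n n R) (x z : n → R) :
    (star M *ᵥ x) ⬝ᵥ z = x ⬝ᵥ (M *ᵥ z) := by
  rw [star_eq_conjTranspose, conjTranspose_eq_transpose_of_trivial, mulVec_transpose,
    dotProduct_mulVec]

theorem abs_sum_mul_mul_le_of_abs_le {ι : Type*} [Fintype ι] {μ p q : ι → ℝ} {lam : ℝ}
    (h : ∀ i, p i ≠ 0 → |μ i| ≤ lam) :
    |∑ i, μ i * (p i * q i)| ≤ lam * √((p ⬝ᵥ p) * (q ⬝ᵥ q)) := by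
  by_cases hp : p = 0
  · simp [hp]
  obtain ⟨j, hj⟩ := Function.ne_iff.mp hp
  have hlam : 0 ≤ lam := (abs_nonneg _).trans (h j hj)
  have hterm : ∀ i, |μ i * (p i * q i)| ≤ lam * (|p i| * |q i|) := fun i => by
    rw [abs_mul, abs_mul]
    rcases eq_or_ne (p i) 0 with hpi | hpi
    · simp [hpi]
    · exact mul_le_mul_of_nonneg_right (h i hpi) (by positivity)
  calc |∑ i, μ i * (p i * q i)| ≤ ∑ i, lam * (|p i| * |q i|) :=
        (abs_sum_le_sum_abs _ _).trans (sum_le_sum fun i _ => hterm i)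
    _ = lam * ∑ i, |p i| * |q i| := (mul_sum _ _ _).symm
    _ ≤ lam * √((p ⬝ᵥ p) * (q ⬝ᵥ q)) := by
      gcongr
      refine Real.le_sqrt_of_sq_le ?_
      simpa only [sq_abs, dotProduct, ← sq] using
        sum_mul_sq_le_sq_mul_sq univ (fun i => |p i|) (fun i => |q i|)

namespace Matrix.IsHermitian

variable {ι : Type*} [Fintype ι] [DecidableEq ι] {A : Matrix ι ι ℝ} (hA : A.IsHermitian)

noncomputable def eigenCoords (x : ι → ℝ) : ι → ℝ :=
  star (hA.eigenvectorUnitary : Matrix ι ι ℝ) *ᵥ x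

lemma eigenCoords_dotProduct_eigenCoords (x y : ι → ℝ) :
    hA.eigenCoords x ⬝ᵥ hA.eigenCoords y = x ⬝ᵥ y := by
  rw [eigenCoords, eigenCoords, star_mulVec_dotProduct, mulVec_mulVec,
    Unitary.mul_star_self_of_mem hA.eigenvectorUnitary.2, one_mulVec]

lemma eigenCoords_mulVec (y : ι → ℝ) :
    hA.eigenCoords (A *ᵥ y) = diagonal hA.eigenvalues *ᵥ hA.eigenCoords y := by
  have h := hA.conjStarAlgAut_star_eigenvectorUnitary
  simp only [Unitary.conjStarAlgAut_apply, Unitary.coe_star, star_star, RCLike.ofReal_real_eq_id,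
    Function.id_comp] at h
  rw [eigenCoords, eigenCoords, ← h, mulVec_mulVec, mulVec_mulVec, mul_assoc,
    Unitary.mul_star_self_of_mem hA.eigenvectorUnitary.2, mul_one]

lemma dotProduct_mulVec_eq_sum_eigenvalues (x y : ι → ℝ) :
    x ⬝ᵥ (A *ᵥ y) = ∑ i, hA.eigenvalues i * (hA.eigenCoords x i * hA.eigenCoords y i) := by
  rw [← hA.eigenCoords_dotProduct_eigenCoords, eigenCoords_mulVec, dotProduct]
  simp only [mulVec_diagonal]
  exact sum_congr rfl fun i _ => by ring

lemma eigenCoords_eq_zero_of_mulVec_eq_smul {o : ι → ℝ} {c : ℝ} (ho : A *ᵥ o = c • o) {i : ι}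
    (hi : hA.eigenvalues i ≠ c) : hA.eigenCoords o i = 0 := by
  have h := congrFun (hA.eigenCoords_mulVec o) i
  simp only [ho, eigenCoords, mulVec_smul, mulVec_diagonal, Pi.smul_apply, smul_eq_mul] at h
  by_contra hoi
  exact hi (mul_right_cancel₀ hoi h).symm

theorem abs_dotProduct_mulVec_le_of_dotProduct_eq_zero {i₀ : ι} {lam : ℝ}
    (hlam : ∀ i, i ≠ i₀ → |hA.eigenvalues i| ≤ lam) {o : ι → ℝ} (ho : o ≠ 0)
    (hAo : A *ᵥ o = hA.eigenvalues i₀ • o) {x : ι → ℝ} (hxo : x ⬝ᵥ o = 0) (y : ι → ℝ) :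
    |x ⬝ᵥ (A *ᵥ y)| ≤ lam * √((x ⬝ᵥ x) * (y ⬝ᵥ y)) := by
  rw [hA.dotProduct_mulVec_eq_sum_eigenvalues, ← hA.eigenCoords_dotProduct_eigenCoords x x,
    ← hA.eigenCoords_dotProduct_eigenCoords y y]
  refine abs_sum_mul_mul_le_of_abs_le fun i hxi => ?_
  rcases ne_or_eq i i₀ with hi | rfl
  · exact hlam i hi
  -- Otherwise `|μᵢ| > λ ≥ |μⱼ|` for all `j ≠ i`, so the eigen-coordinates of `o` vanish off `i`
  -- and `x ⊥ o` forces the `i`-th eigen-coordinate of `x` to vanish.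
  by_contra! hgap
  have hsimple : ∀ j, j ≠ i → hA.eigenCoords o j = 0 := fun j hj =>
    hA.eigenCoords_eq_zero_of_mulVec_eq_smul hAo fun hji => (hlam j hj).not_gt (hji ▸ hgap)
  have hdot : ∀ z,
      hA.eigenCoords z ⬝ᵥ hA.eigenCoords o = hA.eigenCoords z i * hA.eigenCoords o i :=
    fun z => Fintype.sum_eq_single i fun j hj => by rw [hsimple j hj, mul_zero]
  have hoi : hA.eigenCoords o i ≠ 0 := fun hoi => ho <| dotProduct_self_eq_zero.mp <| by
    rw [← hA.eigenCoords_dotProduct_eigenCoords, hdot, hoi, mul_zero]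
  exact mul_ne_zero hxi hoi <| by rw [← hdot, hA.eigenCoords_dotProduct_eigenCoords, hxo]

end Matrix.IsHermitian

section Indicator

variable {V : Type*} [Fintype V] [DecidableEq V]

def indicatorVec (U : Finset V) : V → ℝ := fun v => if v ∈ U then 1 else 0

noncomputable def centeredIndicator (U : Finset V) : V → ℝ :=
  indicatorVec U - ((#U : ℝ) / Fintype.card V) • 1

lemma indicatorVec_dotProduct (U : Finset V) (z : V → ℝ) :
    indicatorVec U ⬝ᵥ z = ∑ v ∈ U, z v := by
  simp [indicatorVec, dotProduct]

lemma dotProduct_indicatorVec (U : Finset V) (z : V → ℝ) :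
    z ⬝ᵥ indicatorVec U = ∑ v ∈ U, z v := by
  rw [dotProduct_comm, indicatorVec_dotProduct]

lemma indicatorVec_dotProduct_one (U : Finset V) : indicatorVec U ⬝ᵥ 1 = #U := by
  simp [indicatorVec_dotProduct]

lemma one_dotProduct_indicatorVec (U : Finset V) : 1 ⬝ᵥ indicatorVec U = #U := by
  rw [dotProduct_comm, indicatorVec_dotProduct_one]

variable [Nonempty V]

lemma centeredIndicator_dotProduct_one (U : Finset V) : centeredIndicator U ⬝ᵥ 1 = 0 := by
  have hV : (Fintype.card V : ℝ) ≠ 0 := Nat.cast_ne_zero.mpr Fintype.card_ne_zero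
  rw [centeredIndicator, sub_dotProduct, smul_dotProduct, indicatorVec_dotProduct_one,
    one_dotProduct_one, smul_eq_mul, div_mul_cancel₀ _ hV, sub_self]

lemma centeredIndicator_dotProduct_self (U : Finset V) :
    centeredIndicator U ⬝ᵥ centeredIndicator U = #U * (1 - #U / Fintype.card V) := by
  have hV : (Fintype.card V : ℝ) ≠ 0 := Nat.cast_ne_zero.mpr Fintype.card_ne_zero
  have hUU : indicatorVec U ⬝ᵥ indicatorVec U = #U := by
    rw [indicatorVec_dotProduct, ← indicatorVec_dotProduct_one, indicatorVec_dotProduct]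
    exact sum_congr rfl fun v hv => by simp [indicatorVec, hv]
  simp only [centeredIndicator, sub_dotProduct, dotProduct_sub, smul_dotProduct, dotProduct_smul,
    hUU, indicatorVec_dotProduct_one, one_dotProduct_indicatorVec, one_dotProduct_one, smul_eq_mul]
  field_simp
  ring

end Indicator

namespace SimpleGraph

variable {V : Type*} [Fintype V] {G : SimpleGraph V} [DecidableRel G.Adj]

lemma adjMatrix_mulVec_one {d : ℕ} (hreg : G.IsRegularOfDegree d) :
    G.adjMatrix ℝ *ᵥ 1 = (d : ℝ) • 1 := by
  ext v
  simp [hreg v]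

lemma one_dotProduct_adjMatrix_mulVec {d : ℕ} (hreg : G.IsRegularOfDegree d) (z : V → ℝ) :
    1 ⬝ᵥ (G.adjMatrix ℝ *ᵥ z) = d * (1 ⬝ᵥ z) := by
  rw [dotProduct_mulVec, ← mulVec_transpose, transpose_adjMatrix, adjMatrix_mulVec_one hreg,
    smul_dotProduct, smul_eq_mul]

variable [DecidableEq V]

lemma indicatorVec_dotProduct_adjMatrix_mulVec (U W : Finset V) :
    indicatorVec U ⬝ᵥ (G.adjMatrix ℝ *ᵥ indicatorVec W)
      = ∑ u ∈ U, ∑ w ∈ W, if G.Adj u w then (1 : ℝ) else 0 := by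
  simp only [indicatorVec_dotProduct, mulVec, dotProduct_indicatorVec, adjMatrix_apply]

lemma centeredIndicator_dotProduct_adjMatrix_mulVec [Nonempty V] {d : ℕ}
    (hreg : G.IsRegularOfDegree d) (U W : Finset V) :
    centeredIndicator U ⬝ᵥ (G.adjMatrix ℝ *ᵥ centeredIndicator W)
      = (∑ u ∈ U, ∑ w ∈ W, if G.Adj u w then (1 : ℝ) else 0)
        - d * #U * #W / Fintype.card V := by
  have hV : (Fintype.card V : ℝ) ≠ 0 := Nat.cast_ne_zero.mpr Fintype.card_ne_zero
  simp only [centeredIndicator, mulVec_sub, mulVec_smul, adjMatrix_mulVec_one hreg, sub_dotProduct,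
    dotProduct_sub, smul_dotProduct, dotProduct_smul, one_dotProduct_adjMatrix_mulVec hreg,
    indicatorVec_dotProduct_adjMatrix_mulVec, indicatorVec_dotProduct_one,
    one_dotProduct_indicatorVec, one_dotProduct_one, smul_eq_mul]
  field_simp
  ring

end SimpleGraph

theorem stmt11_general {n : ℕ} (G : SimpleGraph (Fin n)) [DecidableRel G.Adj] (d : ℕ)
    (hreg : G.IsRegularOfDegree d) (lam : ℝ)
    (hA : (G.adjMatrix ℝ).IsHermitian) (i₀ : Fin n)
    (h₀ : hA.eigenvalues i₀ = d)
    (hlam : ∀ i : Fin n, i ≠ i₀ → |hA.eigenvalues i| ≤ lam)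
    (U W : Finset (Fin n)) :
    |(∑ u ∈ U, ∑ w ∈ W, if G.Adj u w then (1 : ℝ) else 0)
        - (d : ℝ) * U.card * W.card / n|
      ≤ lam * Real.sqrt ((U.card : ℝ) * W.card
          * (1 - (U.card : ℝ) / n) * (1 - (W.card : ℝ) / n)) := by
  have : Nonempty (Fin n) := ⟨i₀⟩
  have hAone : G.adjMatrix ℝ *ᵥ 1 = hA.eigenvalues i₀ • 1 := by
    rw [h₀, SimpleGraph.adjMatrix_mulVec_one hreg]
  have hbound := hA.abs_dotProduct_mulVec_le_of_dotProduct_eq_zero hlam one_ne_zero hAone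
    (centeredIndicator_dotProduct_one U) (centeredIndicator W)
  rw [SimpleGraph.centeredIndicator_dotProduct_adjMatrix_mulVec hreg,
    centeredIndicator_dotProduct_self, centeredIndicator_dotProduct_self,
    Fintype.card_fin] at hbound
  convert hbound using 3
  ring

/-- **Expander mixing lemma.** Let `G` be a `d`-regular graph on `n` vertices
with adjacency eigenvalues `d = λ₁ ≥ λ₂ ≥ ... ≥ λₙ` and let `λ = max_{2≤i≤n} |λᵢ|`
(formalized: some index `i₀` carries the eigenvalue `d`, and all other eigenvalues are
bounded by `lam` in absolute value). Then for all disjoint `U, W ⊆ V(G)`,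
`|e(U,W) - d|U||W|/n| ≤ λ √(|U||W|(1-|U|/n)(1-|W|/n))`. -/
theorem stmt11 {n : ℕ} (G : SimpleGraph (Fin n)) [DecidableRel G.Adj] (d : ℕ)
    (hreg : G.IsRegularOfDegree d) (lam : ℝ)
    (hA : (G.adjMatrix ℝ).IsHermitian) (i₀ : Fin n)
    (h₀ : hA.eigenvalues i₀ = d)
    (hlam : ∀ i : Fin n, i ≠ i₀ → |hA.eigenvalues i| ≤ lam)
    (U W : Finset (Fin n)) (hUW : Disjoint U W) :
    |(∑ u ∈ U, ∑ w ∈ W, if G.Adj u w then (1 : ℝ) else 0)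
        - (d : ℝ) * U.card * W.card / n|
      ≤ lam * Real.sqrt ((U.card : ℝ) * W.card
          * (1 - (U.card : ℝ) / n) * (1 - (W.card : ℝ) / n)) :=
  stmt11_general G d hreg lam hA i₀ h₀ hlam U W
end

section
/- For n sufficiently large and m = O(n log log n), if G ~ G(n, m) is a uniformly random graph on [n] with m edges, then the probability that G has minimum degree at least 2 is at most n · exp(-2m · e^{-2m/n}). -/
open Finset

open scoped Classical in
/-- All graphs on `[n]` with exactly `m` edges, encoded by their edge sets. -/
noncomputable def graphsWithEdges (n m : ℕ) : Finset (Finset (PotEdge n)) :=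
  Finset.univ.filter fun E => E.card = m

open scoped Classical in
/-- Graphs on `[n]` with exactly `m` edges and minimum degree at least 2. -/
noncomputable def graphsWithEdgesMinDeg2 (n m : ℕ) : Finset (Finset (PotEdge n)) :=
  (graphsWithEdges n m).filter fun E =>
    ∀ v : Fin n, 2 ≤ (E.filter fun e => v ∈ e.1).card

/-!
Encode a graph with `m` edges, an ordering `σ` of its edges and an orientation `ε` of each of
them, as the word of length `2m` listing the endpoints of the edges in order. The encoding is
injective, and when the minimum degree is at least 2 every vertex occurs at least twice in the
word; hence `m! 2^m · #{δ ≥ 2}` is at most the number of words of length `2m` over `[n]` using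
every letter at least twice. That number is `(2m)! [z^{2m}] (e^z - 1 - z)^n`, so it is at most
`(2m)! (e^z - 1 - z)^n / z^{2m}` for every `z > 0`. At `z = λ = 2m/n`, Stirling's bound,
`e^λ - 1 - λ ≤ exp (λ - (1 + λ) e^{-λ})` and `(n²)^m ≤ (2 (C(n,2) + 1 - m))^m e^{λ + λ²}` turn
this into `n e^{-2m e^{-λ}} C(C(n,2), m) m! 2^m` as soon as `2 (1 + λ)² e^λ ≤ n`, which holds for
large `n` because `λ = O(log log n)`.
-/

open Real Filter
open scoped Nat

def twiceCoveringWords (α β : Type*) [Fintype α] [DecidableEq α] [Fintype β] [DecidableEq β] :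
    Finset (α → β) :=
  {w | ∀ b, 2 ≤ #{a | w a = b}}

section Words

variable {α : Type*} [Fintype α] [DecidableEq α]

lemma mem_twiceCoveringWords {β : Type*} [Fintype β] [DecidableEq β] {w : α → β} :
    w ∈ twiceCoveringWords α β ↔ ∀ b, 2 ≤ #{a | w a = b} := by
  simp [twiceCoveringWords]

lemma card_twiceCoveringWords_fin_zero_le {z : ℝ} (hz : 0 < z) :
    (#(twiceCoveringWords α (Fin 0)) : ℝ) ≤ (Fintype.card α)! / z ^ Fintype.card α := by
  have hcard : #(twiceCoveringWords α (Fin 0)) ≤ 0 ^ Fintype.card α := by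
    simpa using card_le_univ (twiceCoveringWords α (Fin 0))
  cases h : Fintype.card α with
  | zero => simpa [h] using hcard
  | succ k =>
    rw [h, zero_pow k.succ_ne_zero, Nat.le_zero] at hcard
    simp only [hcard, CharP.cast_eq_zero]
    positivity

lemma card_filter_preimage_last_le {n : ℕ} (S : Finset α) :
    #{w ∈ twiceCoveringWords α (Fin (n + 1)) | ({a | w a = Fin.last n} : Finset α) = S} ≤
      if 2 ≤ #S then #(twiceCoveringWords {a // a ∈ Sᶜ} (Fin n)) else 0 := by
  split_ifs with hS
  · let extend (w' : {a // a ∈ Sᶜ} → Fin n) (a : α) : Fin (n + 1) :=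
      if h : a ∈ Sᶜ then (w' ⟨a, h⟩).castSucc else Fin.last n
    refine card_le_card_of_surjOn extend fun w hw => ?_
    simp only [coe_filter, Set.mem_ofPred_eq, mem_twiceCoveringWords] at hw
    obtain ⟨hw, rfl⟩ := hw
    have hlast (a : α) (ha : a ∈ ({a | w a = Fin.last n} : Finset α)ᶜ) : w a ≠ Fin.last n := by
      simpa using ha
    refine ⟨fun a => (w a).castPred (hlast a a.2), ?_, ?_⟩
    · rw [mem_coe, mem_twiceCoveringWords]
      intro v
      refine (hw v.castSucc).trans (card_le_card_of_surjOn Subtype.val fun a ha => ?_)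
      simp only [coe_filter, mem_univ, true_and, Set.mem_ofPred_eq] at ha
      have : a ∈ ({a | w a = Fin.last n} : Finset α)ᶜ := by simp [ha]
      exact ⟨⟨a, this⟩, by simp [ha], rfl⟩
    · funext a
      by_cases ha : w a = Fin.last n <;> simp [extend, ha]
  · rw [Nat.le_zero, card_eq_zero, filter_eq_empty_iff]
    rintro w hw rfl
    exact hS (mem_twiceCoveringWords.1 hw _)

end Words

lemma sum_range_ite_pow_div_factorial_le {z : ℝ} (hz : 0 ≤ z) (K : ℕ) :
    ∑ j ∈ range K, (if 2 ≤ j then z ^ j / j ! else 0) ≤ exp z - 1 - z := by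
  calc ∑ j ∈ range K, (if 2 ≤ j then z ^ j / j ! else 0)
      ≤ ∑ j ∈ range (K + 2), (if 2 ≤ j then z ^ j / j ! else 0) :=
        sum_le_sum_of_subset_of_nonneg (range_subset_range.2 (by omega))
          fun _ _ _ => by positivity
    _ = (∑ j ∈ range (K + 2), z ^ j / j !) - 1 - z := by
        simp [sum_range_succ' _ (K + 1), sum_range_succ' _ K]
    _ ≤ exp z - 1 - z := by linarith [sum_le_exp_of_nonneg hz (K + 2)]

lemma choose_mul_factorial_div_pow {z : ℝ} (hz : z ≠ 0) {j k : ℕ} (hjk : j ≤ k) :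
    (k.choose j : ℝ) * ((k - j)! / z ^ (k - j)) = k ! / z ^ k * (z ^ j / j !) := by
  obtain ⟨i, rfl⟩ := Nat.exists_eq_add_of_le hjk
  rw [Nat.cast_choose ℝ hjk, Nat.add_sub_cancel_left, pow_add]
  field_simp

theorem card_twiceCoveringWords_le {z : ℝ} (hz : 0 < z) (n : ℕ) (α : Type*) [Fintype α]
    [DecidableEq α] :
    (#(twiceCoveringWords α (Fin n)) : ℝ) ≤
      (Fintype.card α)! * (exp z - 1 - z) ^ n / z ^ Fintype.card α := by
  induction n generalizing α with
  | zero => simpa using card_twiceCoveringWords_fin_zero_le hz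
  | succ n ih =>
    set k := Fintype.card α
    set f := exp z - 1 - z
    have hf : 0 ≤ f := by linarith [add_one_le_exp z]
    calc (#(twiceCoveringWords α (Fin (n + 1))) : ℝ)
        = ∑ S : Finset α, (#{w ∈ twiceCoveringWords α (Fin (n + 1)) |
            ({a | w a = Fin.last n} : Finset α) = S} : ℝ) := by
          exact_mod_cast card_eq_sum_card_fiberwise fun _ _ => mem_univ _
      _ ≤ ∑ S : Finset α, if 2 ≤ #S then (k - #S)! * f ^ n / z ^ (k - #S) else 0 := by
          refine sum_le_sum fun S _ => (Nat.cast_le.2 (card_filter_preimage_last_le S)).trans ?_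
          split_ifs
          · simpa [card_compl] using ih {a // a ∈ Sᶜ}
          · simp
      _ = ∑ j ∈ range (k + 1), (k.choose j : ℝ) *
            if 2 ≤ j then (k - j)! * f ^ n / z ^ (k - j) else 0 := by
          rw [← powerset_univ, sum_powerset_apply_card
            (fun j => if 2 ≤ j then ((k - j)! * f ^ n / z ^ (k - j) : ℝ) else 0), Finset.card_univ]
          simp only [nsmul_eq_mul, k]
      _ = k ! * f ^ n / z ^ k * ∑ j ∈ range (k + 1), if 2 ≤ j then z ^ j / j ! else 0 := by
          rw [mul_sum]
          refine sum_congr rfl fun j hj => ?_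
          split_ifs
          · linear_combination f ^ n *
              choose_mul_factorial_div_pow hz.ne' (Nat.lt_succ_iff.1 (mem_range.1 hj))
          · simp
      _ ≤ k ! * f ^ n / z ^ k * f :=
          mul_le_mul_of_nonneg_left (sum_range_ite_pow_div_factorial_le hz.le _) (by positivity)
      _ = k ! * f ^ (n + 1) / z ^ k := by ring

namespace Sym2

variable {α : Type*} [LinearOrder α]

def endpoint (e : Sym2 α) (b : Bool) : α := if b then e.inf else e.sup

lemma mk_endpoint (e : Sym2 α) (b : Bool) : s(e.endpoint b, e.endpoint !b) = e := by
  induction e using Sym2.ind with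
  | _ x y => cases b <;> rcases le_total x y with h | h <;> simp [endpoint, h, Sym2.eq_swap]

lemma endpoint_injective {e : Sym2 α} (he : ¬ e.IsDiag) : Function.Injective e.endpoint := by
  induction e using Sym2.ind with
  | _ x y =>
    rw [mk_isDiag_iff] at he
    intro b c
    cases b <;> cases c <;> rcases lt_or_gt_of_ne he with h | h <;>
      simp [endpoint, h.le, h.ne, h.ne']

lemma mem_iff_exists_endpoint {e : Sym2 α} {v : α} : v ∈ e ↔ ∃ b, e.endpoint b = v := by
  conv_lhs => rw [← e.mk_endpoint false]
  simp [eq_comm]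

end Sym2

section Encoding

variable {n m : ℕ}

/-- Positions `(j, false)` and `(j, true)` hold the two endpoints of the `j`-th edge,
in the order chosen by `ε j`. -/
def edgeWord {E : Finset (PotEdge n)} (σ : E ≃ Fin m) (ε : Fin m → Bool) :
    Fin m × Bool → Fin n :=
  fun p => (σ.symm p.1).1.1.endpoint (xor p.2 (ε p.1))

variable {E : Finset (PotEdge n)} (σ : E ≃ Fin m) (ε : Fin m → Bool)

lemma mk_edgeWord (j : Fin m) :
    s(edgeWord σ ε (j, false), edgeWord σ ε (j, true)) = (σ.symm j).1.1 := by
  simpa [edgeWord] using Sym2.mk_endpoint _ (ε j)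

lemma mem_iff_exists_mk_edgeWord (x : PotEdge n) :
    x ∈ E ↔ ∃ j, s(edgeWord σ ε (j, false), edgeWord σ ε (j, true)) = x.1 := by
  simp only [mk_edgeWord]
  refine ⟨fun hx => ⟨σ ⟨x, hx⟩, by simp⟩, fun ⟨j, hj⟩ => ?_⟩
  rw [← Subtype.ext hj]
  exact (σ.symm j).2

lemma edgeWord_mem_twiceCoveringWords (hE : ∀ v, 2 ≤ #{e ∈ E | v ∈ e.1}) :
    edgeWord σ ε ∈ twiceCoveringWords (Fin m × Bool) (Fin n) := by
  rw [mem_twiceCoveringWords]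
  intro v
  refine (hE v).trans (card_le_card_of_surjOn (fun p => (σ.symm p.1).1) fun e he => ?_)
  simp only [coe_filter, Set.mem_ofPred_eq] at he
  obtain ⟨b, hb⟩ := Sym2.mem_iff_exists_endpoint.1 he.2
  refine ⟨(σ ⟨e, he.1⟩, xor b (ε (σ ⟨e, he.1⟩))), ?_, by simp⟩
  rw [coe_filter]
  simp only [mem_univ, true_and, Set.mem_ofPred_eq, edgeWord, Equiv.symm_apply_apply]
  simpa [Bool.xor_assoc] using hb

lemma edgeWord_injective :
    Function.Injective fun x : Σ E : Finset (PotEdge n), (E ≃ Fin m) × (Fin m → Bool) =>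
      edgeWord x.2.1 x.2.2 := by
  rintro ⟨E, σ, ε⟩ ⟨E', σ', ε'⟩ h
  simp only at h
  obtain rfl : E = E' := by
    ext x
    rw [mem_iff_exists_mk_edgeWord σ ε, mem_iff_exists_mk_edgeWord σ' ε', h]
  obtain rfl : σ = σ' := by
    refine Equiv.symm_bijective.injective (Equiv.ext fun j => ?_)
    apply Subtype.ext; apply Subtype.ext
    rw [← mk_edgeWord σ ε, ← mk_edgeWord σ' ε', h]
  obtain rfl : ε = ε' := by
    funext j
    exact Sym2.endpoint_injective (σ.symm j).1.2 (by simpa [edgeWord] using congrFun h (j, false))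
  rfl

end Encoding

section Graphs

variable {n m : ℕ}

lemma card_graphsWithEdges : #(graphsWithEdges n m) = (n.choose 2).choose m := by
  have : graphsWithEdges n m = powersetCard m univ := by
    ext E
    simp [graphsWithEdges, mem_powersetCard]
  rw [this, card_powersetCard, Finset.card_univ, Sym2.card_subtype_not_diag, Fintype.card_fin]

lemma graphsWithEdgesMinDeg2_zero (hn : n ≠ 0) : graphsWithEdgesMinDeg2 n 0 = ∅ := by
  refine eq_empty_of_forall_notMem fun E hE => ?_
  simp only [graphsWithEdgesMinDeg2, graphsWithEdges, mem_filter, card_eq_zero] at hE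
  obtain ⟨⟨-, rfl⟩, hdeg⟩ := hE
  simpa using hdeg ⟨0, Nat.pos_of_ne_zero hn⟩

lemma card_graphsWithEdgesMinDeg2_mul_le_card_twiceCoveringWords :
    #(graphsWithEdgesMinDeg2 n m) * (m ! * 2 ^ m) ≤
      #(twiceCoveringWords (Fin m × Bool) (Fin n)) := by
  classical
  have hdom : #((graphsWithEdgesMinDeg2 n m).sigma
      fun E => (univ : Finset ((E ≃ Fin m) × (Fin m → Bool)))) =
      #(graphsWithEdgesMinDeg2 n m) * (m ! * 2 ^ m) := by
    rw [card_sigma, sum_const_nat fun E hE => ?_, mul_comm]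
    simp only [graphsWithEdgesMinDeg2, graphsWithEdges, mem_filter] at hE
    rw [Finset.card_univ, Fintype.card_prod, Fintype.card_equiv (E.equivFinOfCardEq hE.1.2)]
    simp [hE.1.2]
  rw [← hdom]
  refine card_le_card_of_injOn _ (fun x hx => ?_) edgeWord_injective.injOn
  rw [mem_coe, mem_sigma, graphsWithEdgesMinDeg2, mem_filter] at hx
  exact edgeWord_mem_twiceCoveringWords x.2.1 x.2.2 hx.1.2

lemma card_graphsWithEdgesMinDeg2_mul_le {z : ℝ} (hz : 0 < z) :
    (#(graphsWithEdgesMinDeg2 n m) : ℝ) * (m ! * 2 ^ m) ≤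
      (2 * m)! * (exp z - 1 - z) ^ n / z ^ (2 * m) := by
  have := card_twiceCoveringWords_le hz n (Fin m × Bool)
  rw [Fintype.card_prod, Fintype.card_fin, Fintype.card_bool, mul_comm m 2] at this
  exact le_trans (by exact_mod_cast card_graphsWithEdgesMinDeg2_mul_le_card_twiceCoveringWords) this

end Graphs

lemma factorial_le_exp_one_mul_sqrt_mul_pow {k : ℕ} (hk : k ≠ 0) :
    (k ! : ℝ) ≤ exp 1 * √k * (k / exp 1) ^ k := by
  obtain ⟨k, rfl⟩ := Nat.exists_eq_add_one_of_ne_zero hk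
  have hseq : Stirling.stirlingSeq (k + 1) ≤ exp 1 / √2 :=
    Stirling.stirlingSeq_one ▸ Stirling.stirlingSeq'_antitone (Nat.zero_le k)
  rw [Stirling.stirlingSeq, div_le_div_iff₀ (by positivity) (by positivity),
    Real.sqrt_mul zero_le_two] at hseq
  exact (mul_le_mul_iff_of_pos_right (by positivity : (0 : ℝ) < √2)).1 (by linarith)

lemma exp_sub_one_sub_le (x : ℝ) : exp x - 1 - x ≤ exp (x - (1 + x) * exp (-x)) := by
  calc exp x - 1 - x = exp x * (1 - (1 + x) * exp (-x)) := by
        rw [exp_neg]; field_simp; ring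
    _ ≤ exp x * exp (-((1 + x) * exp (-x))) :=
        mul_le_mul_of_nonneg_left (one_sub_le_exp_neg _) (exp_pos x).le
    _ = exp (x - (1 + x) * exp (-x)) := by rw [← exp_add, sub_eq_add_neg]

lemma one_le_one_sub_mul_exp_two_mul {t : ℝ} (h0 : 0 ≤ t) (h1 : t ≤ 1 / 2) :
    1 ≤ (1 - t) * exp (2 * t) := by
  nlinarith [add_one_le_exp (2 * t), exp_pos (2 * t)]

lemma sub_pow_le_two_pow_mul_factorial_mul_choose {n m : ℕ} (hm : (m : ℝ) ≤ n.choose 2 + 1) :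
    ((n : ℝ) ^ 2 - n + 2 - 2 * m) ^ m ≤ 2 ^ m * m ! * (n.choose 2).choose m := by
  have hm' : m ≤ n.choose 2 + 1 := by exact_mod_cast hm
  have hb : (n : ℝ) ^ 2 - n + 2 - 2 * m = 2 * ((n.choose 2 + 1 - m : ℕ) : ℝ) := by
    rw [Nat.cast_sub hm']; push_cast; rw [Nat.cast_choose_two]; ring
  have hdesc := (Nat.pow_sub_le_descFactorial (n.choose 2) m).trans
    (Nat.descFactorial_eq_factorial_mul_choose _ m).le
  rw [hb, mul_pow, mul_assoc]
  gcongr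
  exact_mod_cast hdesc

lemma factorial_mul_pow_div_pow_le {n m : ℕ} {x : ℝ} (hm : m ≠ 0) (hx : x * n = 2 * m) :
    ((2 * m)! : ℝ) * (exp x - 1 - x) ^ n / x ^ (2 * m) ≤
      exp 1 * (2 * m) * (n : ℝ) ^ (2 * m) * exp (-(n + 2 * m) * exp (-x)) := by
  have hpos : (0 : ℝ) < x * n := by rw [hx]; positivity
  have hn : (0 : ℝ) < n := Nat.cast_pos.2 (Nat.pos_of_ne_zero fun h => by simp [h] at hpos)
  have hx0 : 0 < x := (pos_iff_pos_of_mul_pos hpos).2 hn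
  have hf : 0 ≤ exp x - 1 - x := by linarith [add_one_le_exp x]
  have hfact : ((2 * m)! : ℝ) ≤ exp 1 * (2 * m) * (2 * m / exp 1) ^ (2 * m) := by
    have hsqrt : √((2 * m : ℕ) : ℝ) ≤ (2 * m : ℕ) :=
      sqrt_le_self_iff.2 (Or.inr (by exact_mod_cast Nat.one_le_iff_ne_zero.2 (by omega)))
    have := (factorial_le_exp_one_mul_sqrt_mul_pow (k := 2 * m) (by omega)).trans
      (by gcongr : exp 1 * √((2 * m : ℕ) : ℝ) * _ ≤ exp 1 * (2 * m : ℕ) * _)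
    push_cast at this
    exact this
  have hpow : (exp x - 1 - x) ^ n ≤ exp (2 * m - (n + 2 * m) * exp (-x)) := by
    calc (exp x - 1 - x) ^ n ≤ exp (x - (1 + x) * exp (-x)) ^ n := by
          gcongr; exact exp_sub_one_sub_le x
      _ = _ := by rw [← exp_nat_mul, ← hx]; ring_nf
  have hexp : exp (2 * m) = exp 1 ^ (2 * m) := by rw [exp_one_pow]; push_cast; ring_nf
  calc ((2 * m)! : ℝ) * (exp x - 1 - x) ^ n / x ^ (2 * m)
      ≤ exp 1 * (2 * m) * (2 * m / exp 1) ^ (2 * m) *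
          exp (2 * m - (n + 2 * m) * exp (-x)) / x ^ (2 * m) := by gcongr
    _ = _ := by
        rw [exp_sub, hexp, div_pow, ← hx, mul_pow]
        field_simp
        rw [← exp_add, add_neg_cancel, exp_zero]

lemma sq_pow_le_pow_mul_exp {n x : ℝ} {m : ℕ} (hx0 : 0 ≤ x) (hx : x * n = 2 * m)
    (hn : 2 * (1 + x) ≤ n) :
    (n ^ 2) ^ m ≤ (n ^ 2 - n + 2 - 2 * m) ^ m * exp (x + x ^ 2) := by
  have hn0 : 0 < n := by linarith
  set t := (n - 2 + 2 * m) / n ^ 2 with ht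
  have ht0 : 0 ≤ t := div_nonneg (by rw [← hx]; nlinarith) (by positivity)
  have ht1 : t ≤ 1 / 2 := by
    rw [ht, div_le_iff₀ (by positivity), ← hx]; nlinarith
  have hb : n ^ 2 - n + 2 - 2 * m = n ^ 2 * (1 - t) := by rw [ht]; field_simp; ring
  have hb0 : 0 ≤ n ^ 2 - n + 2 - 2 * m := by rw [hb]; nlinarith
  have htm : 2 * t * m ≤ x + x ^ 2 :=
    calc 2 * t * m = t * (x * n) := by rw [hx]; ring
      _ = x + x ^ 2 - 2 * x / n := by rw [ht, ← hx]; field_simp; ring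
      _ ≤ x + x ^ 2 := by linarith [show 0 ≤ 2 * x / n by positivity]
  calc (n ^ 2) ^ m ≤ (n ^ 2 * (1 - t) * exp (2 * t)) ^ m := by
        gcongr
        nlinarith [one_le_one_sub_mul_exp_two_mul ht0 ht1]
    _ = (n ^ 2 - n + 2 - 2 * m) ^ m * exp (2 * t * m) := by
        rw [hb, mul_pow, ← exp_nat_mul]; ring_nf
    _ ≤ _ := by gcongr

lemma exp_one_mul_mul_exp_le {n x : ℝ} (hx : 0 ≤ x) (hn : (1 + x) ^ 2 * exp x ≤ n) :
    exp 1 * (x * n) * exp (x + x ^ 2) ≤ n * exp (n * exp (-x)) := by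
  have hn0 : 0 ≤ n := le_trans (by positivity) hn
  have h1 : exp 1 * x ≤ exp (1 + x) := by
    rw [exp_add]; gcongr; linarith [add_one_le_exp x]
  have h2 : (1 + x) ^ 2 ≤ n * exp (-x) := by
    rwa [exp_neg, ← div_eq_mul_inv, le_div_iff₀ (exp_pos x)]
  calc exp 1 * (x * n) * exp (x + x ^ 2) = n * (exp 1 * x * exp (x + x ^ 2)) := by ring
    _ ≤ n * (exp (1 + x) * exp (x + x ^ 2)) := by gcongr
    _ = n * exp ((1 + x) ^ 2) := by rw [← exp_add]; ring_nf
    _ ≤ n * exp (n * exp (-x)) := by gcongr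

lemma factorial_mul_pow_div_pow_le_mul_choose {n m : ℕ} {x : ℝ} (hm : m ≠ 0)
    (hx : x * n = 2 * m) (hn : 2 * (1 + x) ^ 2 * exp x ≤ n) :
    ((2 * m)! : ℝ) * (exp x - 1 - x) ^ n / x ^ (2 * m) ≤
      n * exp (-(2 * m) * exp (-x)) * (2 ^ m * m ! * (n.choose 2).choose m) := by
  have hn0 : (0 : ℝ) < n :=
    Nat.cast_pos.2 (Nat.pos_of_ne_zero fun h => hm (by simpa [h, eq_comm] using hx))
  have hx0 : 0 ≤ x := (mul_nonneg_iff_of_pos_right hn0).1 (by rw [hx]; positivity)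
  have hn1 : 2 * (1 + x) ≤ n := by nlinarith [add_one_le_exp x]
  have hn2 : (1 + x) ^ 2 * exp x ≤ n := by nlinarith [exp_pos x]
  have hmM : (m : ℝ) ≤ n.choose 2 + 1 := by rw [Nat.cast_choose_two]; nlinarith
  calc ((2 * m)! : ℝ) * (exp x - 1 - x) ^ n / x ^ (2 * m)
      ≤ exp 1 * (2 * m) * (n : ℝ) ^ (2 * m) * exp (-(n + 2 * m) * exp (-x)) :=
        factorial_mul_pow_div_pow_le hm hx
    _ = exp 1 * (x * n) * ((n : ℝ) ^ 2) ^ m * exp (-(n * exp (-x))) *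
          exp (-(2 * m) * exp (-x)) := by
        rw [← pow_mul, hx, mul_assoc _ (exp _), ← exp_add]; ring_nf
    _ ≤ exp 1 * (x * n) * (((n : ℝ) ^ 2 - n + 2 - 2 * m) ^ m * exp (x + x ^ 2)) *
          exp (-(n * exp (-x))) * exp (-(2 * m) * exp (-x)) := by
        gcongr; exact sq_pow_le_pow_mul_exp hx0 hx hn1
    _ ≤ exp 1 * (x * n) * (2 ^ m * m ! * (n.choose 2).choose m * exp (x + x ^ 2)) *
          exp (-(n * exp (-x))) * exp (-(2 * m) * exp (-x)) := by
        gcongr; exact sub_pow_le_two_pow_mul_factorial_mul_choose hmM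
    _ = (exp 1 * (x * n) * exp (x + x ^ 2)) * exp (-(n * exp (-x))) *
          (exp (-(2 * m) * exp (-x)) * (2 ^ m * m ! * (n.choose 2).choose m)) := by ring
    _ ≤ (n * exp (n * exp (-x))) * exp (-(n * exp (-x))) *
          (exp (-(2 * m) * exp (-x)) * (2 ^ m * m ! * (n.choose 2).choose m)) := by
        gcongr ?_ * _ * _
        exact exp_one_mul_mul_exp_le hx0 hn2
    _ = n * exp (-(2 * m) * exp (-x)) * (2 ^ m * m ! * (n.choose 2).choose m) := by
        rw [mul_assoc (n : ℝ), ← exp_add, add_neg_cancel, exp_zero]; ring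

lemma eventually_two_mul_one_add_sq_mul_exp_le {C : ℝ} (hC : 0 < C) :
    ∀ᶠ n : ℕ in atTop, ∀ x : ℝ, 0 ≤ x → x ≤ 2 * C * log (log n) →
      2 * (1 + x) ^ 2 * exp x ≤ n := by
  have hsmall : ∀ᶠ y : ℝ in atTop, 2 * (1 + 2 * C) ^ 2 * log y ^ (2 * C + 2) ≤ y := by
    have hK : 0 < 2 * (1 + 2 * C) ^ 2 := by positivity
    filter_upwards [(isLittleO_log_rpow_rpow_atTop (2 * C + 2) one_pos).bound (inv_pos.2 hK),
      eventually_ge_atTop 1] with y hy hy1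
    rw [rpow_one, norm_of_nonneg (rpow_nonneg (log_nonneg hy1) _),
      norm_of_nonneg (by linarith)] at hy
    rwa [inv_mul_eq_div, le_div_iff₀' hK] at hy
  filter_upwards [tendsto_natCast_atTop_atTop.eventually hsmall,
    (tendsto_log_atTop.comp tendsto_natCast_atTop_atTop).eventually_ge_atTop 1]
    with n hn hlog x hx0 hx
  rw [Function.comp_apply] at hlog
  set ℓ := log n
  have hℓ : 0 < ℓ := by linarith
  calc 2 * (1 + x) ^ 2 * exp x ≤ 2 * ((1 + 2 * C) * ℓ) ^ 2 * ℓ ^ (2 * C) := by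
        have hlogℓ : log ℓ ≤ ℓ := log_le_self hℓ.le
        gcongr
        · linarith [mul_le_mul_of_nonneg_left hlogℓ (by positivity : 0 ≤ 2 * C)]
        · rw [rpow_def_of_pos hℓ]; exact exp_le_exp.2 (by linarith)
    _ = 2 * (1 + 2 * C) ^ 2 * ℓ ^ (2 * C + 2) := by
        rw [rpow_add hℓ, rpow_two]; ring
    _ ≤ n := hn

/-- For `n` sufficiently large and `m = O(n log log n)`, if
`G ~ G(n,m)` is a uniformly random graph on `[n]` with `m` edges, then
`P(δ(G) ≥ 2) ≤ n·exp(-2m·e^{-2m/n})`; stated here without division, as a bound on the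
number of such graphs with minimum degree at least 2 against the total number. -/
theorem stmt13 (C : ℝ) (hC : 0 < C) :
    ∃ N : ℕ, ∀ n ≥ N, ∀ m : ℕ,
      (m : ℝ) ≤ C * n * Real.log (Real.log n) →
      ((graphsWithEdgesMinDeg2 n m).card : ℝ)
        ≤ n * Real.exp (-(2 * m) * Real.exp (-(2 * m) / n))
            * ((graphsWithEdges n m).card : ℝ) := by
  obtain ⟨N, hN⟩ := eventually_atTop.1
    ((eventually_two_mul_one_add_sq_mul_exp_le hC).and (eventually_ne_atTop 0))
  refine ⟨N, fun n hn m hm => ?_⟩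
  obtain ⟨hlarge, hn0⟩ := hN n hn
  rcases eq_or_ne m 0 with rfl | hm0
  · rw [graphsWithEdgesMinDeg2_zero hn0, card_empty, Nat.cast_zero]
    positivity
  have hnpos : (0 : ℝ) < n := by positivity
  set x : ℝ := 2 * m / n with hxdef
  have hx : x * n = 2 * m := div_mul_cancel₀ _ hnpos.ne'
  have hxpos : 0 < x := by positivity
  have hxle : x ≤ 2 * C * log (log n) := by
    rw [hxdef, div_le_iff₀ hnpos]; linarith
  have hbound := (card_graphsWithEdgesMinDeg2_mul_le hxpos).trans
    (factorial_mul_pow_div_pow_le_mul_choose hm0 hx (hlarge x hxpos.le hxle))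
  rw [card_graphsWithEdges, neg_div, ← hxdef]
  refine le_of_mul_le_mul_right ?_ (by positivity : (0 : ℝ) < m ! * 2 ^ m)
  linarith
end

section
/- Let G be a graph on [n], F_0 an edge set on [n] such that every set S ⊆ [n] is incident to at most 0.11n|S| + n^{7/4} edges of F_0 \ E(G) (property R). Suppose End and {End_u}_{u ∈ End} are families of subsets of [n], each of size at least 0.25n, suppose at most 2·(0.01n²) pairs (u,w) with u ∈ End, w ∈ End_u have uw in F \ F_0, and suppose no pair (u,w) with u ∈ End, w ∈ End_u has uw ∈ F ∩ E(G), where F ⊇ F_0. Then for n sufficiently large there exists u ∈ End and w ∈ End_u with uw ∉ F. -/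
/-!
If every pair `(u, w)` with `u ∈ End`, `w ∈ End_u` had `uw ∈ F`, each such `uw` would be either
new (in `F \ F₀`) or, as it is not an edge of `G`, an edge of `F₀ \ E(G)` at `u`. Hence
`0.25n|End| ≤ ∑_u |End_u| ≤ 0.02n² + ∑_{u ∈ End} deg(u)`, degrees taken in `F₀ \ E(G)`.
Property R bounds the edges incident to a set, whereas a degree sum over the set counts the edges
inside it twice; cutting `End` into 100 blocks of at most `n/100 + 1` vertices bounds the double
count by `100 (n/100 + 1)² ≈ n²/100`, so `∑ deg ≤ 0.11n|End| + 100 n^{7/4} + n²/100 + O(n)`.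
Since `0.14 · 0.25 = 0.035 > 0.02 + 0.01`, this is impossible for large `n`.
-/

open Finset

section Incidence

variable {α : Type*} [DecidableEq α]

lemma card_filter_mem_le_ite (T : Finset α) (e : Sym2 α) :
    #{u ∈ T | u ∈ e} ≤ (if ∃ v ∈ T, v ∈ e then 1 else 0) + if e ∈ T.sym2 then 1 else 0 := by
  induction e using Sym2.inductionOn with
  | hf a b =>
    calc #{u ∈ T | u ∈ s(a, b)} ≤ #{u ∈ T | u = a} + #{u ∈ T | u = b} := by
          simp only [Sym2.mem_iff, filter_or]; exact card_union_le _ _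
      _ = _ := by
          have hex : (∃ v ∈ T, v ∈ s(a, b)) ↔ a ∈ T ∨ b ∈ T := by
            simp only [Sym2.mem_iff]; aesop
          simp only [hex, mk_mem_sym2_iff]
          by_cases ha : a ∈ T <;> by_cases hb : b ∈ T <;> simp [ha, hb, filter_eq']

lemma sum_card_filter_mem_le (H : Finset (Sym2 α)) (T : Finset α) :
    ∑ u ∈ T, #{e ∈ H | u ∈ e} ≤ #{e ∈ H | ∃ v ∈ T, v ∈ e} + #T ^ 2 := by
  calc ∑ u ∈ T, #{e ∈ H | u ∈ e} = ∑ e ∈ H, #{u ∈ T | u ∈ e} := by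
        simp only [card_filter]; exact sum_comm
    _ ≤ ∑ e ∈ H, ((if ∃ v ∈ T, v ∈ e then 1 else 0) + if e ∈ T.sym2 then 1 else 0) :=
        sum_le_sum fun e _ => card_filter_mem_le_ite T e
    _ = #{e ∈ H | ∃ v ∈ T, v ∈ e} + #{e ∈ H | e ∈ T.sym2} := by
        rw [sum_add_distrib, card_filter, card_filter]
    _ ≤ #{e ∈ H | ∃ v ∈ T, v ∈ e} + #T ^ 2 := by
        gcongr
        calc #{e ∈ H | e ∈ T.sym2} ≤ #T.sym2 := card_le_card fun e he => (mem_filter.1 he).2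
          _ ≤ #(T ×ˢ T) := by rw [sym2_eq_image]; exact card_image_le
          _ = #T ^ 2 := by rw [card_product, sq]

lemma card_le_card_filter_add_card_incident (H : Finset (Sym2 α)) (B : Finset α) (u : α) :
    #B ≤ #{w ∈ B | s(u, w) ∉ H} + #{e ∈ H | u ∈ e} := by
  rw [← card_filter_add_card_filter_not (s := B) (fun w => s(u, w) ∉ H)]
  refine Nat.add_le_add_left ?_ _
  refine card_le_card_of_injOn (fun w => s(u, w)) (fun w hw => ?_) fun x _ y _ h => ?_
  · simpa using (mem_filter.1 hw).2
  · exact Sym2.congr_right.1 h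

lemma sum_card_incident_le_of_fibers (H : Finset (Sym2 α)) (s : Finset α) (f : α → ℕ) {k m : ℕ}
    (hf : ∀ u ∈ s, f u < k) (hfib : ∀ j, #{u ∈ s | f u = j} ≤ m) {c D : ℝ}
    (hH : ∀ T : Finset α, (#{e ∈ H | ∃ v ∈ T, v ∈ e} : ℝ) ≤ c * #T + D) :
    ∑ u ∈ s, (#{e ∈ H | u ∈ e} : ℝ) ≤ c * #s + k * (D + m ^ 2) := by
  have hmaps : (s : Set α).MapsTo f (range k) := fun u hu => mem_range.2 (hf u hu)
  have hblock : ∀ j, ∑ u ∈ s with f u = j, (#{e ∈ H | u ∈ e} : ℝ)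
      ≤ c * #{u ∈ s | f u = j} + (D + m ^ 2) := by
    intro j
    have hsum := sum_card_filter_mem_le H {u ∈ s | f u = j}
    have hm : (#{u ∈ s | f u = j} : ℝ) ≤ m := by exact_mod_cast hfib j
    have hinc := hH {u ∈ s | f u = j}
    have hm2 : (#{u ∈ s | f u = j} : ℝ) ^ 2 ≤ m ^ 2 := by gcongr
    push_cast [← Nat.cast_le (α := ℝ)] at hsum
    linarith
  rw [← sum_fiberwise_of_maps_to hmaps]
  calc _ ≤ ∑ j ∈ range k, (c * #{u ∈ s | f u = j} + (D + m ^ 2)) := sum_le_sum fun j _ => hblock j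
    _ = c * #s + k * (D + m ^ 2) := by
      rw [sum_add_distrib, ← mul_sum, sum_const, card_range, nsmul_eq_mul,
        card_eq_sum_card_fiberwise hmaps]
      push_cast; ring

end Incidence

lemma card_filter_val_div_eq_le {n q : ℕ} (hq : 0 < q) (s : Finset (Fin n)) (j : ℕ) :
    #{v ∈ s | v.val / q = j} ≤ q := by
  calc #{v ∈ s | v.val / q = j} ≤ #(Ico (q * j) (q * j + q)) := by
        refine card_le_card_of_injOn Fin.val (fun v hv => ?_) Fin.val_injective.injOn
        have hdiv := Nat.div_add_mod v.val q
        have hmod := Nat.mod_lt v.val hq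
        rw [(mem_filter.1 hv).2] at hdiv
        simp only [coe_Ico, Set.mem_Ico]
        omega
    _ = q := by simp

lemma card_filter_product_eq_sum {α β : Type*} [Fintype α] [Fintype β] [DecidableEq α]
    [DecidableEq β] (s : Finset α) (t : α → Finset β) (P : α → β → Prop)
    [∀ a b, Decidable (P a b)] :
    #{p ∈ (univ ×ˢ univ : Finset (α × β)) | p.1 ∈ s ∧ p.2 ∈ t p.1 ∧ P p.1 p.2}
      = ∑ a ∈ s, #{b ∈ t a | P a b} := by
  rw [card_filter, sum_product, ← sum_subset (subset_univ s) fun a _ ha => ?_]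
  · refine sum_congr rfl fun a ha => ?_
    rw [card_filter, ← sum_subset (subset_univ (t a)) fun b _ hb => ?_]
    · exact sum_congr rfl fun b hb => by simp [ha, hb]
    · simp [hb]
  · simp [ha]

lemma mul_rpow_seven_fourths_le_sq {c x : ℝ} (hc : 0 ≤ c) (hx : c ^ 4 ≤ x) :
    c * x ^ ((7 : ℝ) / 4) ≤ x ^ 2 := by
  have hx0 : 0 ≤ x := le_trans (by positivity) hx
  set y := x ^ ((1 : ℝ) / 4) with hy
  have hy0 : 0 ≤ y := by positivity
  have hpow : ∀ k : ℕ, y ^ k = x ^ ((k : ℝ) / 4) := fun k => by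
    rw [hy, ← Real.rpow_natCast, ← Real.rpow_mul hx0]; ring_nf
  have h4 : y ^ 4 = x := by rw [hpow]; norm_num
  have h7 : x ^ ((7 : ℝ) / 4) = y ^ 7 := by rw [hpow]; norm_num
  have hcy : c ≤ y := by
    by_contra! h
    have := pow_lt_pow_left₀ h hy0 (by norm_num : (4 : ℕ) ≠ 0)
    linarith
  rw [h7, ← h4, ← pow_mul, show 4 * 2 = 7 + 1 by rfl, pow_succ, mul_comm]
  exact mul_le_mul_of_nonneg_left hcy (pow_nonneg hy0 7)

lemma pair_budget_lt_quarter_mul {n : ℕ} (hn : 10 ^ 20 ≤ n) {m P : ℝ} (hm : 0.25 * n ≤ m)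
    (hP : 10 ^ 5 * P ≤ n ^ 2) :
    2 * (0.01 * n ^ 2) + (0.11 * n * m + 100 * (P + ((n / 100 + 1 : ℕ) : ℝ) ^ 2))
      < 0.25 * n * m := by
  have hn' : (10 : ℝ) ^ 20 ≤ n := by exact_mod_cast hn
  have hq : ((n / 100 + 1 : ℕ) : ℝ) ≤ n / 100 + 1 := by
    push_cast; linarith [(Nat.cast_div_le : ((n / 100 : ℕ) : ℝ) ≤ n / 100)]
  nlinarith [mul_le_mul_of_nonneg_left hm (by positivity : (0 : ℝ) ≤ 0.14 * n),
    mul_le_mul_of_nonneg_left hn' (by positivity : (0 : ℝ) ≤ n),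
    pow_le_pow_left₀ (by positivity) hq 2]

open scoped Classical in
/-- Let `G` be a graph on `[n]` and `F₀` an edge set such that every
`S ⊆ [n]` is incident to at most `0.11n|S| + n^{7/4}` edges of `F₀ \ E(G)` (property `R`).
Let `End` and `{End_u}` be families of vertex sets, each of size at least `0.25n`; suppose
at most `2·(0.01n²)` pairs `(u,w)` with `u ∈ End, w ∈ End_u` have `uw ∈ F \ F₀`, and no
such pair has `uw ∈ F ∩ E(G)`, where `F ⊇ F₀`. Then, for `n` sufficiently large, there exist
`u ∈ End` and `w ∈ End_u` with `uw ∉ F`. -/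
theorem stmt18 :
    ∃ N : ℕ, ∀ n ≥ N, ∀ (G : SimpleGraph (Fin n)) (F₀ F : Finset (Sym2 (Fin n)))
      (hR : ∀ S : Finset (Fin n),
        ((((F₀ \ G.edgeFinset)).filter fun e => ∃ v ∈ S, v ∈ e).card : ℝ)
          ≤ 0.11 * n * S.card + (n : ℝ) ^ ((7 : ℝ) / 4))
      (hF₀F : F₀ ⊆ F)
      (En : Finset (Fin n)) (Enu : Fin n → Finset (Fin n))
      (hEn : 0.25 * n ≤ (En.card : ℝ))
      (hEnu : ∀ u ∈ En, 0.25 * n ≤ ((Enu u).card : ℝ))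
      (hnew : ((((Finset.univ ×ˢ Finset.univ : Finset (Fin n × Fin n))).filter fun pr =>
          pr.1 ∈ En ∧ pr.2 ∈ Enu pr.1 ∧ s(pr.1, pr.2) ∈ F \ F₀).card : ℝ)
        ≤ 2 * (0.01 * n ^ 2))
      (hqueried : ∀ u ∈ En, ∀ w ∈ Enu u, s(u, w) ∉ F ∩ G.edgeFinset),
      ∃ u ∈ En, ∃ w ∈ Enu u, s(u, w) ∉ F := by
  refine ⟨10 ^ 20, fun n hn G F₀ F hR _ En Enu hEn hEnu hnew hqueried => ?_⟩
  by_contra! hcon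
  set H := F₀ \ G.edgeFinset
  set q := n / 100 + 1
  have hdeg : ∀ u ∈ En, ((Enu u).card : ℝ)
      ≤ #{w ∈ Enu u | s(u, w) ∈ F \ F₀} + #{e ∈ H | u ∈ e} := by
    intro u hu
    have hnotH : {w ∈ Enu u | s(u, w) ∉ H} ⊆ {w ∈ Enu u | s(u, w) ∈ F \ F₀} := by
      intro w hw
      have := hcon u hu w (mem_filter.1 hw).1
      have := hqueried u hu w (mem_filter.1 hw).1
      simp_all [H]
    exact_mod_cast (card_le_card_filter_add_card_incident H (Enu u) u).trans
      (Nat.add_le_add_right (card_le_card hnotH) _)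
  have hnew' : ∑ u ∈ En, (#{w ∈ Enu u | s(u, w) ∈ F \ F₀} : ℝ) ≤ 2 * (0.01 * n ^ 2) := by
    convert hnew using 2
    exact_mod_cast (card_filter_product_eq_sum En Enu fun u w => s(u, w) ∈ F \ F₀).symm
  have hH := sum_card_incident_le_of_fibers H En (fun v => v.val / q) (k := 100)
    (fun u _ => Nat.div_lt_of_lt_mul (by omega)) (card_filter_val_div_eq_le (by omega) En)
    fun T => by convert hR T
  have hlow : 0.25 * n * #En ≤ ∑ u ∈ En, ((Enu u).card : ℝ) := by
    simpa [mul_comm] using card_nsmul_le_sum En _ _ hEnu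
  refine (pair_budget_lt_quarter_mul hn hEn (mul_rpow_seven_fourths_le_sq (by norm_num)
    (by exact_mod_cast (by norm_num : (10 ^ 5) ^ 4 ≤ 10 ^ 20).trans hn))).not_ge ?_
  calc _ ≤ _ := hlow
    _ ≤ _ := (sum_le_sum hdeg).trans_eq sum_add_distrib
    _ ≤ _ := add_le_add hnew' (by exact_mod_cast hH)
end
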